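/- The third-order differential syzygy holds: (∇₂(I_{2b}) + ∇₁(I_{2c}))·I₁ − (3I_{2a} − I₁)·I_{2c} + 3I_{2b}² = 0 identically on the jet space, where ∇₁ = x D_x + y D_y, ∇₂ = u_x D_y − u_y D_x, I₁ = x u_x + y u_y, I_{2a} = x²u_{xx} + 2xy u_{xy} + y²u_{yy}, I_{2b} = x u_y u_{xx} − y u_x u_{yy} + (y u_y − x u_x)u_{xy}, I_{2c} = u_x²u_{yy} − 2u_x u_y u_{xy} + u_y²u_{xx}. -/

import Mathlib

open Matrix

noncomputable section

/-- Coordinates on `J³ℝ²`: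
`(x, y, u, u_x, u_y, u_xx, u_xy, u_yy, u_xxx, u_xxy, u_xyy, u_yyy)`. -/
def Dx (F : (Fin 12 → ℝ) → ℝ) : (Fin 12 → ℝ) → ℝ := fun p =>
  fderiv ℝ F p ![1, 0, p 3, p 5, p 6, p 8, p 9, p 10, 0, 0, 0, 0]

def Dy (F : (Fin 12 → ℝ) → ℝ) : (Fin 12 → ℝ) → ℝ := fun p =>
  fderiv ℝ F p ![0, 1, p 4, p 6, p 7, p 9, p 10, p 11, 0, 0, 0, 0]

/-- `∇₁ = x D_x + y D_y`. -/
def Nabla1 (F : (Fin 12 → ℝ) → ℝ) : (Fin 12 → ℝ) → ℝ := fun p =>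
  p 0 * Dx F p + p 1 * Dy F p

/-- `∇₂ = u_x D_y − u_y D_x`. -/
def Nabla2 (F : (Fin 12 → ℝ) → ℝ) : (Fin 12 → ℝ) → ℝ := fun p =>
  p 3 * Dy F p - p 4 * Dx F p

def I1 : (Fin 12 → ℝ) → ℝ := fun p => p 0 * p 3 + p 1 * p 4

def I2a : (Fin 12 → ℝ) → ℝ := fun p =>
  (p 0) ^ 2 * p 5 + 2 * p 0 * p 1 * p 6 + (p 1) ^ 2 * p 7

def I2b : (Fin 12 → ℝ) → ℝ := fun p =>
  p 0 * p 4 * p 5 - p 1 * p 3 * p 7 + (p 1 * p 4 - p 0 * p 3) * p 6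

def I2c : (Fin 12 → ℝ) → ℝ := fun p =>
  (p 3) ^ 2 * p 7 - 2 * p 3 * p 4 * p 6 + (p 4) ^ 2 * p 5

/-! The total derivatives of the cubic invariants `I₂b` and `I₂c` are computed by the Leibniz rule;
after substituting them, the syzygy is a polynomial identity in the twelve jet coordinates. -/

lemma fderiv_I2b_apply (p v : Fin 12 → ℝ) :
    fderiv ℝ I2b p v =
      (v 0 * p 4 + p 0 * v 4) * p 5 + p 0 * p 4 * v 5
        - ((v 1 * p 3 + p 1 * v 3) * p 7 + p 1 * p 3 * v 7)
        + (v 1 * p 4 + p 1 * v 4 - v 0 * p 3 - p 0 * v 3) * p 6 + (p 1 * p 4 - p 0 * p 3) * v 6 := by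
  unfold I2b
  simp (disch := fun_prop) only [fderiv_fun_add, fderiv_fun_sub, fderiv_fun_mul, fderiv_apply,
    fderiv_fun_id, ContinuousLinearMap.comp_id, smul_add, _root_.add_apply,
    _root_.sub_apply, _root_.smul_apply, ContinuousLinearMap.proj_apply,
    smul_eq_mul]
  ring

lemma fderiv_I2c_apply (p v : Fin 12 → ℝ) :
    fderiv ℝ I2c p v =
      2 * p 3 * v 3 * p 7 + p 3 ^ 2 * v 7
        - 2 * (v 3 * p 4 * p 6 + p 3 * v 4 * p 6 + p 3 * p 4 * v 6)
        + 2 * p 4 * v 4 * p 5 + p 4 ^ 2 * v 5 := by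
  unfold I2c
  simp (disch := fun_prop) only [sq, fderiv_fun_add, fderiv_fun_sub, fderiv_fun_mul, fderiv_apply,
    fderiv_fun_id, ContinuousLinearMap.comp_id, smul_add, fderiv_fun_const, Pi.zero_apply,
    ContinuousLinearMap.comp_zero, smul_zero, add_zero, _root_.add_apply,
    _root_.sub_apply, _root_.smul_apply, ContinuousLinearMap.proj_apply,
    smul_eq_mul]
  ring

/-- The third-order differential syzygy
`(∇₂(I_{2b}) + ∇₁(I_{2c}))·I₁ − (3I_{2a} − I₁)·I_{2c} + 3I_{2b}² = 0`. -/
theorem stmt_5 : ∀ p : Fin 12 → ℝ,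
    (Nabla2 I2b p + Nabla1 I2c p) * I1 p - (3 * I2a p - I1 p) * I2c p + 3 * (I2b p) ^ 2 = 0 := by
  intro p
  simp only [Nabla1, Nabla2, Dx, Dy, fderiv_I2b_apply, fderiv_I2c_apply, cons_val_zero,
    cons_val_one, cons_val, I1, I2a, I2b, I2c]
  ring
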